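/- arXiv:1907.11495 — 2 statements merged into one kernel-verified Lean document; each statement's English description precedes it below -/
import Mathlib

section
/- For every natural number N ≥ 1 and every real φ, with U₁^z = (|0⟩⟨0| + e^{iφ}|1⟩⟨1|) ⊗ I₂^{⊗(N−1)}, the conjugated witness U₁^z · W²_GHZ · (U₁^z)† equals (1/2)·I − 𝒵 − (1/4)·(cos φ · σx + sin φ · σy) ⊗ σx^{⊗(N−1)}, where W²_GHZ = (1/2)·I − 𝒵 − (1/4)·σx^{⊗N} and 𝒵 = (|0^N⟩⟨0^N| + |1^N⟩⟨1^N|)/2. -/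
/-!
`U₁^z` is the Kronecker product of the phase gate `P = diag(1, e^{iφ})` on the first qubit with
identities, so conjugating any Kronecker product by it acts factorwise and only on the first
factor. `P` is unitary and diagonal, hence fixes `I` and the projectors `|0⟩⟨0|`, `|1⟩⟨1|` that
build `𝒵`, while `P σx P† = cos φ · σx + sin φ · σy`.
-/

open Matrix Complex

noncomputable section

/-- Pauli X matrix. -/
def pX : Matrix (Fin 2) (Fin 2) ℂ := !![0, 1; 1, 0]

/-- Pauli Y matrix. -/
def pY : Matrix (Fin 2) (Fin 2) ℂ := !![0, -Complex.I; Complex.I, 0]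

/-- Kronecker product of a family of single-qubit operators, one for each of the `N` qubits. -/
def tensorVec (N : ℕ) (A : Fin N → Matrix (Fin 2) (Fin 2) ℂ) :
    Matrix (Fin N → Fin 2) (Fin N → Fin 2) ℂ :=
  Matrix.of fun b c => ∏ j, A j (b j) (c j)

/-- N-fold Kronecker (tensor) power of a single-qubit operator. -/
def tensorPow (N : ℕ) (A : Matrix (Fin 2) (Fin 2) ℂ) :
    Matrix (Fin N → Fin 2) (Fin N → Fin 2) ℂ :=
  tensorVec N fun _ => A

/-- The all-zeros bit string, indexing `|0^N⟩`. -/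
def zeros (N : ℕ) : Fin N → Fin 2 := fun _ => 0

/-- The all-ones bit string, indexing `|1^N⟩`. -/
def ones (N : ℕ) : Fin N → Fin 2 := fun _ => 1

/-- `𝒵 = (|0^N⟩⟨0^N| + |1^N⟩⟨1^N|)/2`. -/
def Zop (N : ℕ) : Matrix (Fin N → Fin 2) (Fin N → Fin 2) ℂ :=
  ((1 : ℂ) / 2) • (Matrix.single (zeros N) (zeros N) (1 : ℂ)
    + Matrix.single (ones N) (ones N) (1 : ℂ))

/-- The two-setting GHZ witness `W²_GHZ = (1/2)·I − 𝒵 − (1/4)·σx^{⊗N}`. -/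
def W2ghz (N : ℕ) : Matrix (Fin N → Fin 2) (Fin N → Fin 2) ℂ :=
  ((1 : ℂ) / 2) • (1 : Matrix (Fin N → Fin 2) (Fin N → Fin 2) ℂ) - Zop N
    - ((1 : ℂ) / 4) • tensorPow N pX

/-- `U₁^z = (|0⟩⟨0| + e^{iφ}|1⟩⟨1|) ⊗ I₂^{⊗(N−1)}`: a Z-rotation on the first qubit. -/
def U1z (N : ℕ) (φ : ℝ) : Matrix (Fin N → Fin 2) (Fin N → Fin 2) ℂ :=
  tensorVec N fun j =>
    if (j : ℕ) = 0 then !![1, 0; 0, Complex.exp (Complex.I * φ)] else 1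

section tensorVec

variable {N : ℕ}

theorem tensorVec_mul (A B : Fin N → Matrix (Fin 2) (Fin 2) ℂ) :
    tensorVec N A * tensorVec N B = tensorVec N fun j => A j * B j := by
  ext b d
  simp only [tensorVec, mul_apply, of_apply, ← Finset.prod_mul_distrib]
  exact (Fintype.prod_sum fun j x => A j (b j) x * B j x (d j)).symm

theorem tensorVec_conjTranspose (A : Fin N → Matrix (Fin 2) (Fin 2) ℂ) :
    (tensorVec N A)ᴴ = tensorVec N fun j => (A j)ᴴ := by
  ext b c
  simp [tensorVec, star_prod]

theorem tensorVec_one : tensorVec N (fun _ => 1) = 1 := by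
  ext b c
  simp only [tensorVec, of_apply, one_apply, Finset.prod_boole, Finset.mem_univ, true_implies,
    funext_iff]

theorem tensorVec_single (b c : Fin N → Fin 2) :
    tensorVec N (fun j => single (b j) (c j) 1) = single b c 1 := by
  ext x y
  simp only [tensorVec, of_apply, single_apply, Finset.prod_boole, Finset.mem_univ, true_implies,
    funext_iff, forall_and]

end tensorVec

def phaseGate (φ : ℝ) : Matrix (Fin 2) (Fin 2) ℂ :=
  !![1, 0; 0, Complex.exp (Complex.I * φ)]

theorem exp_I_mul_ofReal (φ : ℝ) :
    Complex.exp (Complex.I * φ) = (Real.cos φ : ℂ) + (Real.sin φ : ℂ) * Complex.I := by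
  rw [mul_comm, Complex.exp_mul_I, Complex.ofReal_cos, Complex.ofReal_sin]

theorem exp_I_mul_ofReal_mul_conj (φ : ℝ) :
    Complex.exp (Complex.I * φ) * starRingEnd ℂ (Complex.exp (Complex.I * φ)) = 1 := by
  rw [Complex.mul_conj, mul_comm, Complex.normSq_eq_norm_sq, Complex.norm_exp_ofReal_mul_I,
    one_pow, Complex.ofReal_one]

theorem phaseGate_mul_conjTranspose (φ : ℝ) : phaseGate φ * (phaseGate φ)ᴴ = 1 := by
  ext i j
  fin_cases i <;> fin_cases j <;>
    simp [phaseGate, mul_apply, Fin.sum_univ_two, exp_I_mul_ofReal_mul_conj]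

theorem phaseGate_conj_single (φ : ℝ) (x : Fin 2) :
    phaseGate φ * single x x 1 * (phaseGate φ)ᴴ = single x x 1 := by
  ext i j
  fin_cases x <;> fin_cases i <;> fin_cases j <;>
    simp [phaseGate, mul_apply, Fin.sum_univ_two, vecMul, dotProduct, single_apply,
      exp_I_mul_ofReal_mul_conj]

theorem phaseGate_conj_pX (φ : ℝ) :
    phaseGate φ * pX * (phaseGate φ)ᴴ = (Real.cos φ : ℂ) • pX + (Real.sin φ : ℂ) • pY := by
  ext i j
  fin_cases i <;> fin_cases j <;>
    simp [phaseGate, pX, pY, mul_apply, Fin.sum_univ_two, exp_I_mul_ofReal, ← Complex.cos_conj,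
      ← Complex.sin_conj]

section U1z

variable {N : ℕ} (φ : ℝ)

theorem U1z_conj_tensorVec (B : Fin N → Matrix (Fin 2) (Fin 2) ℂ) :
    U1z N φ * tensorVec N B * (U1z N φ)ᴴ = tensorVec N fun j =>
      if (j : ℕ) = 0 then phaseGate φ * B j * (phaseGate φ)ᴴ else B j := by
  rw [U1z, tensorVec_conjTranspose, tensorVec_mul, tensorVec_mul]
  congr 1
  funext j
  split_ifs <;> simp [phaseGate]

theorem U1z_mul_conjTranspose : U1z N φ * (U1z N φ)ᴴ = 1 := by
  calc U1z N φ * (U1z N φ)ᴴ = U1z N φ * tensorVec N (fun _ => 1) * (U1z N φ)ᴴ := by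
        rw [tensorVec_one, mul_one]
    _ = tensorVec N (fun _ => 1) := by
        rw [U1z_conj_tensorVec]
        congr 1
        funext j
        split_ifs <;> simp [phaseGate_mul_conjTranspose]
    _ = 1 := tensorVec_one

theorem U1z_conj_single (b : Fin N → Fin 2) :
    U1z N φ * single b b 1 * (U1z N φ)ᴴ = single b b 1 := by
  rw [← tensorVec_single, U1z_conj_tensorVec]
  congr 1
  funext j
  split_ifs <;> simp [phaseGate_conj_single]

theorem U1z_conj_Zop : U1z N φ * Zop N * (U1z N φ)ᴴ = Zop N := by
  rw [Zop, Matrix.mul_smul, Matrix.smul_mul, Matrix.mul_add, Matrix.add_mul, U1z_conj_single,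
    U1z_conj_single]

theorem U1z_conj_tensorPow_pX :
    U1z N φ * tensorPow N pX * (U1z N φ)ᴴ = tensorVec N fun j =>
      if (j : ℕ) = 0 then ((Real.cos φ : ℝ) : ℂ) • pX + ((Real.sin φ : ℝ) : ℂ) • pY else pX := by
  rw [tensorPow, U1z_conj_tensorVec]
  congr 1
  funext j
  split_ifs <;> simp [phaseGate_conj_pX]

end U1z

theorem conjugated_two_setting_witness_general (N : ℕ) (φ : ℝ) :
    U1z N φ * W2ghz N * (U1z N φ)ᴴ
      = ((1 : ℂ) / 2) • (1 : Matrix (Fin N → Fin 2) (Fin N → Fin 2) ℂ) - Zop N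
          - ((1 : ℂ) / 4) •
              tensorVec N (fun j =>
                if (j : ℕ) = 0 then
                  ((Real.cos φ : ℝ) : ℂ) • pX + ((Real.sin φ : ℝ) : ℂ) • pY
                else pX) := by
  simp only [W2ghz, Matrix.mul_sub, Matrix.sub_mul, Matrix.mul_smul, Matrix.smul_mul, mul_one,
    U1z_mul_conjTranspose, U1z_conj_Zop, U1z_conj_tensorPow_pX]

theorem conjugated_two_setting_witness (N : ℕ) (hN : 1 ≤ N) (φ : ℝ) :
    U1z N φ * W2ghz N * (U1z N φ)ᴴ
      = ((1 : ℂ) / 2) • (1 : Matrix (Fin N → Fin 2) (Fin N → Fin 2) ℂ) - Zop N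
          - ((1 : ℂ) / 4) •
              tensorVec N (fun j =>
                if (j : ℕ) = 0 then
                  ((Real.cos φ : ℝ) : ℂ) • pX + ((Real.sin φ : ℝ) : ℂ) • pY
                else pX) :=
  conjugated_two_setting_witness_general N φ
end
end

section
/- For every natural number N ≥ 1 and all reals θ, φ, let v = cos θ |0⟩ + e^{iφ} sin θ |1⟩ ∈ ℂ² and let U_CNOT = [C_{N−1}X_N]⋯[C_2X_3][C_1X_2] be the product of CNOT gates applied in sequence along the chain (with the empty product for N = 1 read as the identity). Then U_CNOT · ((2·v v† − I₂) ⊗ I₂^{⊗(N−1)}) · U_CNOT† = cos(2θ)·(σz ⊗ I₂^{⊗(N−1)}) + sin(2θ)·(cos φ · σx^{⊗N} + sin φ · σy ⊗ σx^{⊗(N−1)}). -/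
open Matrix Complex

noncomputable section

/-- Pauli Z matrix. -/
def pZ : Matrix (Fin 2) (Fin 2) ℂ := !![1, 0; 0, -1]

/-- The CNOT gate `C_iX_j` with control qubit `i` and target qubit `j`:
it maps the basis state `|c⟩` to `|c'⟩` where `c'` flips bit `j` iff bit `i` is 1. -/
def cnot (N : ℕ) (i j : Fin N) : Matrix (Fin N → Fin 2) (Fin N → Fin 2) ℂ :=
  Matrix.of fun b c => if b = Function.update c j (c j + c i) then 1 else 0

/-- The CNOT chain `U_CNOT = [C_{N−1}X_N]⋯[C_2X_3][C_1X_2]` (empty product = identity). -/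
def UCNOT (N : ℕ) : Matrix (Fin N → Fin 2) (Fin N → Fin 2) ℂ :=
  (((List.finRange (N - 1)).reverse).map fun k =>
    cnot N ⟨k.val, by have := k.isLt; omega⟩ ⟨k.val + 1, by have := k.isLt; omega⟩).prod

/-- The single-qubit state `v = cos θ |0⟩ + e^{iφ} sin θ |1⟩`. -/
def v1 (θ φ : ℝ) : Fin 2 → ℂ := ![(Real.cos θ : ℂ), Complex.exp (Complex.I * φ) * (Real.sin θ : ℂ)]

/-- The rank-one 2×2 matrix `v v†`. -/
def vvH (θ φ : ℝ) : Matrix (Fin 2) (Fin 2) ℂ :=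
  Matrix.of fun i j => v1 θ φ i * (starRingEnd ℂ) (v1 θ φ j)

/-!
Conjugation by a CNOT gate `C_iX_j` permutes basis states, and on a Pauli string with the
identity on the target `j` it acts by the Heisenberg-picture rules: a diagonal operator (`I`, `Z`)
on the control `i` is left alone, while an off-diagonal one (`X`, `Y`) drags an `X` onto the target.
Along the chain `C_{N-1}X_N ⋯ C_1X_2` this fixes `Z ⊗ I ⊗ ⋯ ⊗ I` and turns `X ⊗ I ⊗ ⋯ ⊗ I` and
`Y ⊗ I ⊗ ⋯ ⊗ I` into `X ⊗ X ⊗ ⋯ ⊗ X` and `Y ⊗ X ⊗ ⋯ ⊗ X`. The theorem follows by linearity in the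
first tensor factor from the Bloch decomposition
`2 v v† - I = cos 2θ Z + sin 2θ (cos φ X + sin φ Y)`.
-/

open Finset

lemma Fin.two_add_self : ∀ a : Fin 2, a + a = 0 := by decide

lemma Fin.two_add_add_iff_ne : ∀ x y a b : Fin 2, a ≠ b → (x + a = y + b ↔ x ≠ y) := by decide

lemma pX_apply (x y : Fin 2) : pX x y = if x ≠ y then 1 else 0 := by
  fin_cases x <;> fin_cases y <;> rfl

lemma diag_pX : pX.diag = 0 := by
  ext a; fin_cases a <;> rfl

lemma diag_pY : pY.diag = 0 := by
  ext a; fin_cases a <;> rfl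

lemma isDiag_pZ : pZ.IsDiag := by
  intro a b hab
  fin_cases a <;> fin_cases b <;> first | rfl | exact absurd rfl hab

lemma one_apply_add_add_mul_of_isDiag {P : Matrix (Fin 2) (Fin 2) ℂ} (hP : P.IsDiag)
    (x y a b : Fin 2) :
    (1 : Matrix (Fin 2) (Fin 2) ℂ) (x + a) (y + b) * P a b =
      (1 : Matrix (Fin 2) (Fin 2) ℂ) x y * P a b := by
  rcases eq_or_ne a b with rfl | hab
  · simp only [one_apply, add_left_inj]
  · rw [hP hab, mul_zero, mul_zero]

lemma one_apply_add_add_mul_of_diag_eq_zero {P : Matrix (Fin 2) (Fin 2) ℂ} (hP : P.diag = 0)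
    (x y a b : Fin 2) :
    (1 : Matrix (Fin 2) (Fin 2) ℂ) (x + a) (y + b) * P a b = pX x y * P a b := by
  rcases eq_or_ne a b with rfl | hab
  · rw [show P a a = 0 from congrFun hP a, mul_zero, mul_zero]
  · rw [one_apply, pX_apply, if_congr (Fin.two_add_add_iff_ne x y a b hab) rfl rfl]

lemma two_smul_vvH_sub_one (θ φ : ℝ) :
    (2 : ℂ) • vvH θ φ - 1 = ((Real.cos (2 * θ) : ℝ) : ℂ) • pZ +
      ((Real.sin (2 * θ) : ℝ) : ℂ) •
        (((Real.cos φ : ℝ) : ℂ) • pX + ((Real.sin φ : ℝ) : ℂ) • pY) := by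
  have hexp : Complex.exp (Complex.I * φ) = Real.cos φ + Complex.I * Real.sin φ := by
    rw [mul_comm, Complex.exp_mul_I, ← Complex.ofReal_cos, ← Complex.ofReal_sin]; ring
  have hθ : (Real.cos θ : ℂ) ^ 2 + (Real.sin θ : ℂ) ^ 2 = 1 := by
    exact_mod_cast Real.cos_sq_add_sin_sq θ
  have hφ : (Real.cos φ : ℂ) ^ 2 + (Real.sin φ : ℂ) ^ 2 = 1 := by
    exact_mod_cast Real.cos_sq_add_sin_sq φ
  ext a b
  fin_cases a <;> fin_cases b <;>
    simp [vvH, v1, pX, pY, pZ, hexp, Real.cos_two_mul, Real.sin_two_mul,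
      -Complex.ofReal_cos, -Complex.ofReal_sin]
  · ring
  · ring
  · ring
  · linear_combination 2 * (Real.sin θ : ℂ) ^ 2 * hφ + 2 * hθ -
      2 * (Real.sin θ : ℂ) ^ 2 * (Real.sin φ : ℂ) ^ 2 * Complex.I_sq

section

variable {N : ℕ}

lemma tensorVec_apply_eq_mul_mul_prod {i j : Fin N} (hij : i ≠ j)
    (A : Fin N → Matrix (Fin 2) (Fin 2) ℂ) (b c : Fin N → Fin 2) :
    tensorVec N A b c = A j (b j) (c j) * A i (b i) (c i) *
        ∏ k ∈ (univ.erase j).erase i, A k (b k) (c k) := by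
  rw [tensorVec, of_apply, ← mul_prod_erase _ _ (mem_univ j), mul_assoc,
    ← mul_prod_erase _ _ (mem_erase.2 ⟨hij, mem_univ i⟩)]

lemma tensorVec_ite_val_eq_zero_linear (hN : 0 < N) (a b : ℂ)
    (P Q R : Matrix (Fin 2) (Fin 2) ℂ) :
    tensorVec N (fun j => if (j : ℕ) = 0 then a • P + b • Q else R) =
      a • tensorVec N (fun j => if (j : ℕ) = 0 then P else R) +
        b • tensorVec N (fun j => if (j : ℕ) = 0 then Q else R) := by
  set j₀ : Fin N := ⟨0, hN⟩
  have hsplit : ∀ S : Matrix (Fin 2) (Fin 2) ℂ, ∀ x y : Fin N → Fin 2,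
      tensorVec N (fun j => if (j : ℕ) = 0 then S else R) x y =
        S (x j₀) (y j₀) * ∏ k ∈ univ.erase j₀, R (x k) (y k) := by
    intro S x y
    rw [tensorVec, of_apply, ← mul_prod_erase _ _ (mem_univ j₀), if_pos rfl]
    congr 1
    refine prod_congr rfl fun k hk => ?_
    rw [if_neg fun h => ne_of_mem_erase hk (Fin.ext h)]
  ext x y
  simp only [Matrix.add_apply, Matrix.smul_apply, hsplit, smul_eq_mul]
  ring

def cnotMap (i j : Fin N) (c : Fin N → Fin 2) : Fin N → Fin 2 :=
  Function.update c j (c j + c i)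

lemma cnotMap_involutive {i j : Fin N} (hij : i ≠ j) : Function.Involutive (cnotMap i j) := by
  intro c
  funext k
  rcases eq_or_ne k j with rfl | hk
  · simp [cnotMap, hij, add_assoc, Fin.two_add_self]
  · simp [cnotMap, hk]

lemma cnot_apply (i j : Fin N) (b c : Fin N → Fin 2) :
    cnot N i j b c = if b = cnotMap i j c then 1 else 0 := rfl

lemma cnot_eq_toMatrix {i j : Fin N} (hij : i ≠ j) :
    cnot N i j = ((cnotMap_involutive hij).toPerm).toPEquiv.toMatrix := by
  ext b c
  rw [cnot_apply, PEquiv.toMatrix_apply, Equiv.toPEquiv_apply]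
  exact if_congr ((cnotMap_involutive hij).eq_iff.symm.trans Option.some_inj.symm) rfl rfl

lemma cnot_conjTranspose {i j : Fin N} (hij : i ≠ j) : (cnot N i j)ᴴ = cnot N i j := by
  ext b c
  rw [conjTranspose_apply, cnot_apply, cnot_apply, apply_ite star, star_one, star_zero]
  exact if_congr ((cnotMap_involutive hij).eq_iff.symm.trans eq_comm) rfl rfl

lemma cnot_mul_mul_cnot {i j : Fin N} (hij : i ≠ j)
    (M : Matrix (Fin N → Fin 2) (Fin N → Fin 2) ℂ) :
    cnot N i j * M * cnot N i j = M.submatrix (cnotMap i j) (cnotMap i j) := by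
  rw [cnot_eq_toMatrix hij, PEquiv.toMatrix_toPEquiv_mul, PEquiv.mul_toMatrix_toPEquiv,
    Function.Involutive.toPerm_symm]
  rfl

lemma tensorVec_submatrix_cnotMap_apply {i j : Fin N} (hij : i ≠ j)
    {A : Fin N → Matrix (Fin 2) (Fin 2) ℂ} (hj : A j = 1) (b c : Fin N → Fin 2) :
    (tensorVec N A).submatrix (cnotMap i j) (cnotMap i j) b c =
      (1 : Matrix (Fin 2) (Fin 2) ℂ) (b j + b i) (c j + c i) * A i (b i) (c i) *
        ∏ k ∈ (univ.erase j).erase i, A k (b k) (c k) := by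
  rw [submatrix_apply, tensorVec_apply_eq_mul_mul_prod hij]
  simp only [cnotMap, Function.update_self, Function.update_of_ne hij, hj]
  congr 1
  refine prod_congr rfl fun k hk => ?_
  rw [Function.update_of_ne (ne_of_mem_erase (mem_of_mem_erase hk)),
    Function.update_of_ne (ne_of_mem_erase (mem_of_mem_erase hk))]

lemma cnot_mul_tensorVec_mul_cnot_of_isDiag {i j : Fin N} (hij : i ≠ j)
    {A : Fin N → Matrix (Fin 2) (Fin 2) ℂ} (hi : (A i).IsDiag) (hj : A j = 1) :
    cnot N i j * tensorVec N A * cnot N i j = tensorVec N A := by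
  ext b c
  rw [cnot_mul_mul_cnot hij, tensorVec_submatrix_cnotMap_apply hij hj,
    tensorVec_apply_eq_mul_mul_prod hij, one_apply_add_add_mul_of_isDiag hi, hj]

lemma cnot_mul_tensorVec_mul_cnot_of_diag_eq_zero {i j : Fin N} (hij : i ≠ j)
    {A : Fin N → Matrix (Fin 2) (Fin 2) ℂ} (hi : (A i).diag = 0) (hj : A j = 1) :
    cnot N i j * tensorVec N A * cnot N i j = tensorVec N (Function.update A j pX) := by
  ext b c
  rw [cnot_mul_mul_cnot hij, tensorVec_submatrix_cnotMap_apply hij hj,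
    tensorVec_apply_eq_mul_mul_prod hij, one_apply_add_add_mul_of_diag_eq_zero hi,
    Function.update_self, Function.update_of_ne hij]
  congr 1
  refine prod_congr rfl fun k hk => ?_
  rw [Function.update_of_ne (ne_of_mem_erase (mem_of_mem_erase hk))]

/-- The gate `C_kX_{k+1}` (qubits counted from `0`), padded by the identity out of range so that
prefixes of the chain can be indexed by their length in `ℕ`. -/
def cnotLink (N k : ℕ) : Matrix (Fin N → Fin 2) (Fin N → Fin 2) ℂ :=
  if h : k + 1 < N then cnot N ⟨k, by omega⟩ ⟨k + 1, h⟩ else 1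

def cnotChain (N m : ℕ) : Matrix (Fin N → Fin 2) (Fin N → Fin 2) ℂ :=
  ((List.range m).reverse.map (cnotLink N)).prod

lemma cnotChain_zero : cnotChain N 0 = 1 := rfl

lemma UCNOT_eq_cnotChain (N : ℕ) : UCNOT N = cnotChain N (N - 1) := by
  rw [UCNOT, cnotChain, ← List.map_coe_finRange_eq_range, ← List.map_reverse, List.map_map]
  congr 1
  refine List.map_congr_left fun k _ => ?_
  rw [Function.comp_apply, cnotLink, dif_pos (by omega)]

lemma cnotChain_succ_conj {m : ℕ} (hm : m + 1 < N)
    (M : Matrix (Fin N → Fin 2) (Fin N → Fin 2) ℂ) :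
    cnotChain N (m + 1) * M * (cnotChain N (m + 1))ᴴ =
      cnot N ⟨m, by omega⟩ ⟨m + 1, hm⟩ * (cnotChain N m * M * (cnotChain N m)ᴴ) *
        cnot N ⟨m, by omega⟩ ⟨m + 1, hm⟩ := by
  have hchain : cnotChain N (m + 1) = cnot N ⟨m, by omega⟩ ⟨m + 1, hm⟩ * cnotChain N m := by
    rw [cnotChain, cnotChain, List.range_succ, List.reverse_append, List.reverse_singleton,
      List.singleton_append, List.map_cons, List.prod_cons, cnotLink, dif_pos hm]
  rw [hchain, conjTranspose_mul, cnot_conjTranspose (by simp [Fin.ext_iff])]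
  simp only [Matrix.mul_assoc]

lemma cnotChain_conj_of_isDiag {P : Matrix (Fin 2) (Fin 2) ℂ} (hP : P.IsDiag) {m : ℕ}
    (hm : m ≤ N - 1) :
    cnotChain N m * tensorVec N (fun j => if (j : ℕ) = 0 then P else 1) * (cnotChain N m)ᴴ =
      tensorVec N (fun j => if (j : ℕ) = 0 then P else 1) := by
  induction m with
  | zero => rw [cnotChain_zero, Matrix.one_mul, conjTranspose_one, Matrix.mul_one]
  | succ m ih =>
    rw [cnotChain_succ_conj (by omega), ih (by omega)]
    refine cnot_mul_tensorVec_mul_cnot_of_isDiag (by simp [Fin.ext_iff]) ?_ (if_neg (by simp))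
    split_ifs
    exacts [hP, isDiag_one]

lemma cnotChain_conj_of_diag_eq_zero {P : Matrix (Fin 2) (Fin 2) ℂ} (hP : P.diag = 0) {m : ℕ}
    (hm : m ≤ N - 1) :
    cnotChain N m * tensorVec N (fun j => if (j : ℕ) = 0 then P else 1) * (cnotChain N m)ᴴ =
      tensorVec N (fun j => if (j : ℕ) = 0 then P else if (j : ℕ) ≤ m then pX else 1) := by
  induction m with
  | zero =>
    rw [cnotChain_zero, Matrix.one_mul, conjTranspose_one, Matrix.mul_one]
    congr 1
    funext j
    split_ifs <;> first | rfl | omega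
  | succ m ih =>
    rw [cnotChain_succ_conj (by omega), ih (by omega),
      cnot_mul_tensorVec_mul_cnot_of_diag_eq_zero (by simp [Fin.ext_iff]) ?_ (by simp)]
    · congr 1
      funext j
      simp only [Function.update_apply, Fin.ext_iff]
      split_ifs <;> first | rfl | omega
    · split_ifs with _ hle
      exacts [hP, diag_pX, (hle le_rfl).elim]

lemma UCNOT_conj_of_isDiag {P : Matrix (Fin 2) (Fin 2) ℂ} (hP : P.IsDiag) :
    UCNOT N * tensorVec N (fun j => if (j : ℕ) = 0 then P else 1) * (UCNOT N)ᴴ =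
      tensorVec N (fun j => if (j : ℕ) = 0 then P else 1) := by
  rw [UCNOT_eq_cnotChain]
  exact cnotChain_conj_of_isDiag hP le_rfl

lemma UCNOT_conj_of_diag_eq_zero {P : Matrix (Fin 2) (Fin 2) ℂ} (hP : P.diag = 0) :
    UCNOT N * tensorVec N (fun j => if (j : ℕ) = 0 then P else 1) * (UCNOT N)ᴴ =
      tensorVec N (fun j => if (j : ℕ) = 0 then P else pX) := by
  rw [UCNOT_eq_cnotChain, cnotChain_conj_of_diag_eq_zero hP le_rfl]
  congr 1
  funext j
  rw [if_pos (show (j : ℕ) ≤ N - 1 by omega)]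

end

theorem cnot_conjugation_stabilizer (N : ℕ) (hN : 1 ≤ N) (θ φ : ℝ) :
    UCNOT N *
        tensorVec N (fun j => if (j : ℕ) = 0 then
          (2 : ℂ) • vvH θ φ - (1 : Matrix (Fin 2) (Fin 2) ℂ) else 1) *
        (UCNOT N)ᴴ
      = ((Real.cos (2 * θ) : ℝ) : ℂ) •
            tensorVec N (fun j => if (j : ℕ) = 0 then pZ else 1)
          + ((Real.sin (2 * θ) : ℝ) : ℂ) •
              (((Real.cos φ : ℝ) : ℂ) • tensorPow N pX
                + ((Real.sin φ : ℝ) : ℂ) •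
                    tensorVec N (fun j => if (j : ℕ) = 0 then pY else pX)) := by
  rw [two_smul_vvH_sub_one, tensorVec_ite_val_eq_zero_linear hN,
    tensorVec_ite_val_eq_zero_linear hN]
  simp only [Matrix.mul_add, Matrix.add_mul, Matrix.mul_smul, Matrix.smul_mul]
  rw [UCNOT_conj_of_isDiag isDiag_pZ, UCNOT_conj_of_diag_eq_zero diag_pX,
    UCNOT_conj_of_diag_eq_zero diag_pY]
  simp only [ite_self, tensorPow]
end
end
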